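/- arXiv:2304.14096 — 2 statements merged into one kernel-verified Lean document; each statement's English description precedes it below -/
import Mathlib

section
/- For every integer d ≥ 2 and every index 1 ≤ j ≤ d²−1, the trace of the Recursive Block Basis element B_j^{(d)} equals 0 if d is even, and equals 1 if d is odd. -/
/-!
Every block of the recursion has a visible trace. Appending the entry `(-1)^(d-1)` to
`B^{(d-1)}` turns the alternating sum `∑_{i<d-1} (-1)^i` into `∑_{i<d} (-1)^i`; conjugating by
the involution `P_{(k,d-1)}` preserves the trace, and `diag(D, σ)` with traceless `σ` has the
trace `∑_{i<d-2} (-1)^i = ∑_{i<d} (-1)^i` of `D`; the last diagonal element is counted directly.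
As `∑_{i<d} (-1)^i` is `0` for even `d` and `1` for odd `d`, induction on `d` gives the claim.
-/

open Matrix

/-- The Pauli matrix `σ1`. -/
noncomputable def σ1 : Matrix (Fin 2) (Fin 2) ℂ := !![0, 1; 1, 0]

/-- The Pauli matrix `σ2`. -/
noncomputable def σ2 : Matrix (Fin 2) (Fin 2) ℂ := !![0, -Complex.I; Complex.I, 0]

/-- The Pauli matrix `σ3`. -/
noncomputable def σ3 : Matrix (Fin 2) (Fin 2) ℂ := !![1, 0; 0, -1]

/-- Append a scalar diagonal entry at the bottom-right corner of a square matrix. -/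
noncomputable def diagAppend {d : ℕ} (M : Matrix (Fin d) (Fin d) ℂ) (c : ℂ) :
    Matrix (Fin (d + 1)) (Fin (d + 1)) ℂ :=
  Matrix.reindex finSumFinEquiv finSumFinEquiv
    (Matrix.fromBlocks M 0 0 (Matrix.of fun _ _ => c))

/-- The matrix `diag(D, σ)` of size `d`, where `D` is the `(d-2) × (d-2)` diagonal matrix with
`l`-th diagonal entry `(-1)^(l-1)` (for 1-based `l`) and `σ` is a `2 × 2` bottom-right block. -/
noncomputable def Dsig (d : ℕ) (σ : Matrix (Fin 2) (Fin 2) ℂ) : Matrix (Fin d) (Fin d) ℂ :=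
  Matrix.of fun i j =>
    if (i : ℕ) < d - 2 ∨ (j : ℕ) < d - 2 then
      (if i = j ∧ (i : ℕ) < d - 2 then ((-1 : ℂ)) ^ (i : ℕ) else 0)
    else σ (if (i : ℕ) = d - 2 then 0 else 1) (if (j : ℕ) = d - 2 then 0 else 1)

/-- The `d × d` permutation matrix of the transposition exchanging the (1-based) positions
`k` and `d - 1` (the identity matrix when `k = d - 1`). -/
noncomputable def Pswap (d k : ℕ) : Matrix (Fin d) (Fin d) ℂ :=
  Matrix.of fun i j =>
    if (i : ℕ) = k - 1 then (if (j : ℕ) = d - 2 then 1 else 0)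
    else if (i : ℕ) = d - 2 then (if (j : ℕ) = k - 1 then 1 else 0)
    else (if i = j then 1 else 0)

/-- The RBB element with index `d^2 - 1`: `diag(I_{⌊d/2⌋+1}, -I_{⌊d/2⌋})` for odd `d`, and
`diag(I_{d/2-1}, -I_{d/2-1}, -σ3)` for even `d`. -/
noncomputable def lastDiag (d : ℕ) : Matrix (Fin d) (Fin d) ℂ :=
  Matrix.diagonal fun i =>
    if d % 2 = 1 then (if (i : ℕ) < d / 2 + 1 then 1 else -1)
    else (if (i : ℕ) < d / 2 - 1 ∨ (i : ℕ) = d - 1 then 1 else -1)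

/-- The Recursive Block Basis: `RBB d j` is the `d × d` matrix `B_j^{(d)}`, for the 1-based
index `1 ≤ j ≤ d^2`.  For `d = 2` it is the Pauli basis `σ1, σ2, σ3, I`; for `d > 2` it is
defined recursively from `RBB (d-1)`:
* `B_j^{(d)} = diag(B_j^{(d-1)}, (-1)^(d-1))` for `1 ≤ j ≤ (d-1)^2 - 1`;
* `B_j^{(d)} = P_{(k,d-1)} ⬝ diag(D, σ1) ⬝ P_{(k,d-1)}` for `j = (d-1)^2 + (k-1)`, `1 ≤ k ≤ d-1`;
* `B_j^{(d)} = P_{(k,d-1)} ⬝ diag(D, σ2) ⬝ P_{(k,d-1)}` for `j = (d-1)^2 + (d-1) + (k-1)`,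
  `1 ≤ k ≤ d-1`;
* `B_{d^2-1}^{(d)} = lastDiag d` and `B_{d^2}^{(d)} = I_d`. -/
noncomputable def RBB : (d : ℕ) → ℕ → Matrix (Fin d) (Fin d) ℂ
  | 0, _ => 1
  | 1, _ => 1
  | 2, j => if j = 1 then σ1 else if j = 2 then σ2 else if j = 3 then σ3 else 1
  | (m + 3), j =>
      if j ≤ (m + 2) ^ 2 - 1 then diagAppend (RBB (m + 2) j) ((-1 : ℂ) ^ (m + 2))
      else if j ≤ (m + 2) ^ 2 + (m + 1) then
        Pswap (m + 3) (j - (m + 2) ^ 2 + 1) * Dsig (m + 3) σ1 *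
          Pswap (m + 3) (j - (m + 2) ^ 2 + 1)
      else if j ≤ (m + 2) ^ 2 + 2 * (m + 2) - 1 then
        Pswap (m + 3) (j - (m + 2) ^ 2 - (m + 2) + 1) * Dsig (m + 3) σ2 *
          Pswap (m + 3) (j - (m + 2) ^ 2 - (m + 2) + 1)
      else if j = (m + 3) ^ 2 - 1 then lastDiag (m + 3)
      else 1

open Finset
@[simp] lemma trace_σ1 : σ1.trace = 0 := by simp [σ1, Matrix.trace, Fin.sum_univ_two]
@[simp] lemma trace_σ2 : σ2.trace = 0 := by simp [σ2, Matrix.trace, Fin.sum_univ_two]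
@[simp] lemma trace_σ3 : σ3.trace = 0 := by simp [σ3, Matrix.trace, Fin.sum_univ_two]

lemma trace_diagAppend {d : ℕ} (M : Matrix (Fin d) (Fin d) ℂ) (c : ℂ) :
    (diagAppend M c).trace = M.trace + c := by
  simp [diagAppend, Matrix.trace, Fin.sum_univ_castSucc]

lemma Pswap_eq_permMatrix {d k : ℕ} (hk : k - 1 < d) :
    Pswap d k = (Equiv.swap (⟨k - 1, hk⟩ : Fin d) ⟨d - 2, by omega⟩).permMatrix ℂ := by
  ext i j
  simp only [Pswap, Matrix.of_apply, PEquiv.toMatrix_apply, Equiv.toPEquiv_apply, Option.mem_def,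
    Option.some.injEq, Equiv.swap_apply_def, Fin.ext_iff]
  split_ifs <;> simp_all

lemma trace_Pswap_mul_mul_Pswap {d k : ℕ} (hk : k - 1 < d) (M : Matrix (Fin d) (Fin d) ℂ) :
    (Pswap d k * M * Pswap d k).trace = M.trace := by
  rw [Matrix.trace_mul_comm, ← Matrix.mul_assoc, Pswap_eq_permMatrix hk, ← Matrix.permMatrix_mul,
    Equiv.swap_mul_self, Matrix.permMatrix_one, Matrix.one_mul]

lemma trace_Dsig (n : ℕ) (σ : Matrix (Fin 2) (Fin 2) ℂ) :
    (Dsig (n + 2) σ).trace = ∑ i ∈ range n, (-1) ^ i + σ.trace := by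
  simp [Dsig, Matrix.trace, Fin.sum_univ_castSucc, Fin.sum_univ_eq_sum_range, add_assoc]

lemma sum_range_ite_lt {M : Type*} [AddCommMonoid M] (a b : M) (c n : ℕ) :
    ∑ i ∈ range (c + n), (if i < c then a else b) = c • a + n • b := by
  rw [sum_range_add, sum_congr rfl fun i hi => if_pos (mem_range.1 hi),
    sum_congr rfl fun i _ => if_neg (by omega)]
  simp

lemma trace_lastDiag (d : ℕ) : (lastDiag d).trace = if Even d then 0 else 1 := by
  rw [lastDiag, Matrix.trace_diagonal]
  obtain ⟨n, rfl | rfl⟩ := Nat.even_or_odd' d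
  · rcases n with _ | m
    · simp
    simp only [show 2 * (m + 1) % 2 ≠ 1 by omega, if_false, show 2 * (m + 1) / 2 - 1 = m by omega,
      show 2 * (m + 1) - 1 = 2 * m + 1 by omega,
      Fin.sum_univ_eq_sum_range (fun i => if i < m ∨ i = 2 * m + 1 then (1 : ℂ) else -1)]
    have hf : ∀ i ∈ range (2 * m + 1),
        (if i < m ∨ i = 2 * m + 1 then (1 : ℂ) else -1) = if i < m then 1 else -1 := by
      intro i hi
      simp only [mem_range] at hi
      simp only [show i ≠ 2 * m + 1 by omega, or_false]
    rw [show 2 * (m + 1) = 2 * m + 1 + 1 by ring, sum_range_succ, sum_congr rfl hf,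
      show 2 * m + 1 = m + (m + 1) by ring, sum_range_ite_lt]
    simp
  · simp only [show (2 * n + 1) % 2 = 1 by omega, show (2 * n + 1) / 2 = n by omega, if_true,
      Fin.sum_univ_eq_sum_range (fun i => if i < n + 1 then (1 : ℂ) else -1)]
    rw [show 2 * n + 1 = (n + 1) + n by ring, sum_range_ite_lt]
    simp

lemma trace_RBB_two {j : ℕ} (hj1 : 1 ≤ j) (hj2 : j ≤ 3) : (RBB 2 j).trace = 0 := by
  interval_cases j <;> simp [RBB]

/-- For every `d ≥ 2` and every `1 ≤ j ≤ d^2 - 1`, the trace of `B_j^{(d)}`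
is `0` if `d` is even and `1` if `d` is odd. -/
theorem rbb_trace (d : ℕ) (hd : 2 ≤ d) (j : ℕ) (hj1 : 1 ≤ j) (hj2 : j ≤ d ^ 2 - 1) :
    (RBB d j).trace = if Even d then 0 else 1 := by
  rw [← neg_one_geom_sum]
  induction d, hd using Nat.le_induction generalizing j with
  | base => simpa [sum_range_succ] using trace_RBB_two hj1 hj2
  | succ d hd ih =>
    obtain ⟨m, rfl⟩ := Nat.exists_eq_add_of_le' hd
    rw [show m + 2 + 1 = m + 3 from rfl] at hj2 ⊢
    have hsq : (m + 3) ^ 2 - 1 = (m + 2) ^ 2 + 2 * (m + 2) := Nat.sub_eq_of_eq_add (by ring)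
    rw [RBB]
    split_ifs with hA hB hC hD
    · rw [trace_diagAppend, ih j hj1 hA, ← sum_range_succ]
    · rw [trace_Pswap_mul_mul_Pswap (by omega), trace_Dsig, trace_σ1]
      simp [sum_range_succ, pow_succ]
    · rw [trace_Pswap_mul_mul_Pswap (by omega), trace_Dsig, trace_σ2]
      simp [sum_range_succ, pow_succ]
    · rw [trace_lastDiag, neg_one_geom_sum]
    · omega
end

section
/- For every n ≥ 1 and all α, β, γ ∈ ℝ^{2^{n−1}}, there exist real numbers t_A and t'_A, indexed by the IZ-strings A of length n−1, such that blockdiag(U(α_1,β_1,γ_1),…,U(α_{2^{n−1}},β_{2^{n−1}},γ_{2^{n−1}})) = (∏_A exp(i t_A (A ⊗ σ3))) · blockdiag(R_Y(γ_1),…,R_Y(γ_{2^{n−1}})) · (∏_A exp(i t'_A (A ⊗ σ3))). The matrices A ⊗ σ3 are pairwise commuting diagonal matrices, so the two products are independent of the order of their factors. -/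
/-! Everything in sight is diagonal except the `R_Y` blocks. Since
`U(α,β,γ) = R_Z(α) R_Y(γ) R_Z(β)`, it suffices to write `blockdiag(R_Z(θ_j))_j` as a product of
the exponentials. The string `A ⊗ σ3` is `diag(±w_A(j))`, where `w_A` is the Walsh function of
`A`, so that product is `diag(exp(±i ∑_A t_A w_A(j)))`; the Walsh functions are orthogonal, so
the Walsh–Hadamard transform `t_A = 2^{-n} ∑_j w_A(j) θ_j` makes `∑_A t_A w_A(j) = θ_j`. -/

open Matrix

/-- The 2×2 factor of an IZ-string: `σ3` if the bit is `true`, `I_2` otherwise. -/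
noncomputable def izBit (b : Bool) : Matrix (Fin 2) (Fin 2) ℂ := if b then σ3 else 1

/-- Kronecker product `A ⊗ B` with a `2 × 2` last factor, realized on `Fin (k * 2)`. -/
noncomputable def kronLast {k : ℕ} (A : Matrix (Fin k) (Fin k) ℂ)
    (B : Matrix (Fin 2) (Fin 2) ℂ) : Matrix (Fin (k * 2)) (Fin (k * 2)) ℂ :=
  Matrix.of fun i j =>
    A ⟨(i : ℕ) / 2, by omega⟩ ⟨(j : ℕ) / 2, by omega⟩ *
      B ⟨(i : ℕ) % 2, by omega⟩ ⟨(j : ℕ) % 2, by omega⟩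

/-- `IZ n f` is the IZ-string `A_1 ⊗ ⋯ ⊗ A_n` of length `n`, where `A_i = σ3` if `f i = true`
and `A_i = I_2` if `f i = false`. -/
noncomputable def IZ : (n : ℕ) → (Fin n → Bool) → Matrix (Fin (2 ^ n)) (Fin (2 ^ n)) ℂ
  | 0, _ => 1
  | (n + 1), f => kronLast (IZ n fun i => f i.castSucc) (izBit (f (Fin.last n)))

/-- The rotation gate `R_Z(θ) = diag(e^{iθ}, e^{-iθ})`. -/
noncomputable def RZ (θ : ℝ) : Matrix (Fin 2) (Fin 2) ℂ :=
  !![Complex.exp (Complex.I * θ), 0; 0, Complex.exp (-(Complex.I * θ))]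

/-- The rotation gate `R_Y(θ) = !![cos θ, sin θ; -sin θ, cos θ]`. -/
noncomputable def RY (θ : ℝ) : Matrix (Fin 2) (Fin 2) ℂ :=
  !![(Real.cos θ : ℂ), (Real.sin θ : ℂ); -(Real.sin θ : ℂ), (Real.cos θ : ℂ)]

/-- The generic `2 × 2` special unitary matrix
`U(α,β,γ) = !![e^{i(α+β)} cos γ, e^{i(α-β)} sin γ; -e^{-i(α-β)} sin γ, e^{-i(α+β)} cos γ]`. -/
noncomputable def Umat (α β γ : ℝ) : Matrix (Fin 2) (Fin 2) ℂ :=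
  !![Complex.exp (Complex.I * (α + β)) * Real.cos γ,
      Complex.exp (Complex.I * (α - β)) * Real.sin γ;
    -(Complex.exp (-(Complex.I * (α - β))) * Real.sin γ),
      Complex.exp (-(Complex.I * (α + β))) * Real.cos γ]

/-- `blockDiag2 m M` is the `2m × 2m` block-diagonal matrix with the 2×2 diagonal blocks
`M 0, M 1, …, M (m-1)`. -/
noncomputable def blockDiag2 (m : ℕ) (M : ℕ → Matrix (Fin 2) (Fin 2) ℂ) :
    Matrix (Fin (m * 2)) (Fin (m * 2)) ℂ :=
  Matrix.of fun i j =>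
    if (i : ℕ) / 2 = (j : ℕ) / 2 then
      M ((i : ℕ) / 2) ⟨(i : ℕ) % 2, by omega⟩ ⟨(j : ℕ) % 2, by omega⟩
    else 0

-- The last factor of the string acts on the least significant bit of `k`.
noncomputable def walsh : (n : ℕ) → (Fin n → Bool) → ℕ → ℝ
  | 0, _, _ => 1
  | n + 1, f, k => walsh n (fun i => f i.castSucc) (k / 2) *
      (if f (Fin.last n) ∧ k % 2 = 1 then -1 else 1)

noncomputable def walshCoeff (n : ℕ) (θ : ℕ → ℝ) (f : Fin n → Bool) : ℝ :=
  (2 ^ n : ℝ)⁻¹ * ∑ k ∈ Finset.range (2 ^ n), walsh n f k * θ k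

lemma sum_bool_sign_mul_sign (k k' : ℕ) :
    ∑ b : Bool, (if b ∧ k % 2 = 1 then (-1 : ℝ) else 1) * (if b ∧ k' % 2 = 1 then -1 else 1) =
      if k % 2 = k' % 2 then 2 else 0 := by
  rw [Fintype.sum_bool]
  rcases Nat.mod_two_eq_zero_or_one k with hk | hk <;>
    rcases Nat.mod_two_eq_zero_or_one k' with hk' | hk' <;> norm_num [hk, hk']

lemma walsh_snoc (n : ℕ) (b : Bool) (g : Fin n → Bool) (k : ℕ) :
    walsh (n + 1) (Fin.snocEquiv (fun _ => Bool) (b, g)) k =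
      walsh n g (k / 2) * (if b ∧ k % 2 = 1 then -1 else 1) := by
  simp [walsh, Fin.snocEquiv]

lemma sum_walsh_mul_walsh : ∀ (n : ℕ) {k k' : ℕ}, k < 2 ^ n → k' < 2 ^ n →
    ∑ f : Fin n → Bool, walsh n f k * walsh n f k' = if k = k' then (2 ^ n : ℝ) else 0
  | 0, k, k', hk, hk' => by
    obtain rfl : k = 0 := by omega
    obtain rfl : k' = 0 := by omega
    simp [walsh]
  | n + 1, k, k', hk, hk' => by
    have hdiv := sum_walsh_mul_walsh n (k := k / 2) (k' := k' / 2) (by omega) (by omega)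
    calc ∑ f : Fin (n + 1) → Bool, walsh (n + 1) f k * walsh (n + 1) f k'
        = ∑ p : Bool × (Fin n → Bool), walsh (n + 1) (Fin.snocEquiv _ p) k *
            walsh (n + 1) (Fin.snocEquiv _ p) k' :=
          (Fintype.sum_equiv (Fin.snocEquiv fun _ => Bool) _ _ fun _ => rfl).symm
      _ = (∑ g : Fin n → Bool, walsh n g (k / 2) * walsh n g (k' / 2)) *
            ∑ b : Bool, (if b ∧ k % 2 = 1 then (-1 : ℝ) else 1) *
              (if b ∧ k' % 2 = 1 then -1 else 1) := by
          rw [Fintype.sum_prod_type_right, Finset.sum_mul]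
          refine Finset.sum_congr rfl fun g _ => ?_
          rw [Finset.mul_sum]
          refine Finset.sum_congr rfl fun b _ => ?_
          rw [walsh_snoc, walsh_snoc]
          ring
      _ = if k = k' then (2 ^ (n + 1) : ℝ) else 0 := by
          rw [hdiv, sum_bool_sign_mul_sign]
          by_cases h : k = k'
          · simp [h, pow_succ]
          · have : k / 2 ≠ k' / 2 ∨ k % 2 ≠ k' % 2 := by omega
            rcases this with h' | h' <;> simp [h, h']

lemma sum_walshCoeff_mul_walsh (n : ℕ) (θ : ℕ → ℝ) {k : ℕ} (hk : k < 2 ^ n) :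
    ∑ f : Fin n → Bool, walshCoeff n θ f * walsh n f k = θ k := by
  calc ∑ f : Fin n → Bool, walshCoeff n θ f * walsh n f k
      = (2 ^ n : ℝ)⁻¹ * ∑ k' ∈ Finset.range (2 ^ n),
          (∑ f : Fin n → Bool, walsh n f k * walsh n f k') * θ k' := by
        simp only [walshCoeff, Finset.mul_sum, Finset.sum_mul]
        rw [Finset.sum_comm]
        exact Finset.sum_congr rfl fun _ _ => Finset.sum_congr rfl fun _ _ => by ring
    _ = θ k := by
        rw [Finset.sum_congr rfl fun k' hk' =>
          by rw [sum_walsh_mul_walsh n hk (Finset.mem_range.mp hk')]]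
        simp only [ite_mul, zero_mul, Finset.sum_ite_eq, Finset.mem_range, hk, if_true]
        field_simp

lemma list_prod_map_diagonal {ι R α : Type*} [Fintype ι] [DecidableEq ι] [CommSemiring R]
    (l : List α) (g : α → ι → R) :
    (l.map fun a => diagonal (g a)).prod = diagonal fun i => (l.map fun a => g a i).prod := by
  induction l with
  | nil => simp
  | cons a l ih => simp [ih]

lemma kronLast_diagonal {k : ℕ} (u : Fin k → ℂ) (v : Fin 2 → ℂ) :
    kronLast (diagonal u) (diagonal v) =
      diagonal fun i : Fin (k * 2) => u ⟨i / 2, by omega⟩ * v ⟨i % 2, by omega⟩ := by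
  ext i j
  by_cases h : i = j
  · subst h; simp [kronLast]
  · have : (i : ℕ) / 2 ≠ j / 2 ∨ (i : ℕ) % 2 ≠ j % 2 := by omega
    rcases this with h' | h' <;> simp [kronLast, diagonal_apply, Fin.ext_iff, h, h']

lemma izBit_eq_diagonal (b : Bool) :
    izBit b = diagonal fun a : Fin 2 => if b ∧ (a : ℕ) = 1 then -1 else 1 := by
  cases b <;> ext i j <;> fin_cases i <;> fin_cases j <;> simp [izBit, σ3, one_apply]

lemma IZ_eq_diagonal : ∀ (n : ℕ) (f : Fin n → Bool),
    IZ n f = diagonal fun i : Fin (2 ^ n) => (walsh n f i : ℂ)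
  | 0, f => by ext i j; fin_cases i; fin_cases j; simp [IZ, walsh]
  | n + 1, f => by
    rw [IZ, IZ_eq_diagonal n, izBit_eq_diagonal, kronLast_diagonal]
    congr 1; funext i
    simp [walsh, apply_ite Complex.ofReal]

lemma kronLast_IZ_σ3 (n : ℕ) (f : Fin n → Bool) :
    kronLast (IZ n f) σ3 =
      diagonal fun i : Fin (2 ^ n * 2) =>
        (if (i : ℕ) % 2 = 1 then -1 else 1) * (walsh n f (i / 2) : ℂ) := by
  rw [IZ_eq_diagonal, show σ3 = izBit true from rfl, izBit_eq_diagonal, kronLast_diagonal]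
  congr 1; funext i
  simp [mul_comm]

lemma list_prod_exp_kronLast_IZ_σ3 (n : ℕ) (t : (Fin n → Bool) → ℝ) :
    ((Finset.univ : Finset (Fin n → Bool)).toList.map
        fun f => NormedSpace.exp ((Complex.I * (t f : ℂ)) • kronLast (IZ n f) σ3)).prod =
      diagonal fun i : Fin (2 ^ n * 2) => Complex.exp (Complex.I *
        ((if (i : ℕ) % 2 = 1 then -1 else 1) * ∑ f, (t f * walsh n f (i / 2) : ℝ))) := by
  simp only [kronLast_IZ_σ3, ← diagonal_smul, exp_diagonal, list_prod_map_diagonal,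
    Finset.prod_map_toList]
  congr 1; funext i
  simp only [Pi.exp_def, Pi.smul_apply, smul_eq_mul, ← Complex.exp_eq_exp_ℂ, ← Complex.exp_sum]
  push_cast
  simp only [Finset.mul_sum]
  exact congrArg Complex.exp (Finset.sum_congr rfl fun _ _ => by ring)

def blockDiag2Equiv (m : ℕ) : Fin (m * 2) ≃ Fin 2 × Fin m :=
  finProdFinEquiv.symm.trans (Equiv.prodComm _ _)

lemma blockDiag2_eq_submatrix (m : ℕ) (M : ℕ → Matrix (Fin 2) (Fin 2) ℂ) :
    blockDiag2 m M =
      (blockDiagonal fun j : Fin m => M j).submatrix (blockDiag2Equiv m) (blockDiag2Equiv m) := by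
  ext i j
  simp [blockDiag2, blockDiag2Equiv, blockDiagonal_apply, Fin.ext_iff, Fin.modNat]

lemma blockDiag2_mul (m : ℕ) (M N : ℕ → Matrix (Fin 2) (Fin 2) ℂ) :
    blockDiag2 m M * blockDiag2 m N = blockDiag2 m fun j => M j * N j := by
  simp only [blockDiag2_eq_submatrix, submatrix_mul_equiv, blockDiagonal_mul]

lemma blockDiag2_diagonal (m : ℕ) (w : ℕ → Fin 2 → ℂ) :
    blockDiag2 m (fun j => diagonal (w j)) =
      diagonal fun i : Fin (m * 2) => w (i / 2) ⟨i % 2, by omega⟩ := by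
  ext i j
  by_cases h : i = j
  · subst h; simp [blockDiag2]
  · have : (i : ℕ) / 2 ≠ j / 2 ∨ (i : ℕ) % 2 ≠ j % 2 := by omega
    rcases this with h' | h' <;> simp [blockDiag2, diagonal_apply, Fin.ext_iff, h, h']

lemma RZ_eq_diagonal (θ : ℝ) :
    RZ θ = diagonal fun a : Fin 2 =>
      Complex.exp (Complex.I * ((if (a : ℕ) = 1 then -1 else 1) * θ)) := by
  ext i j; fin_cases i <;> fin_cases j <;> simp [RZ]

lemma Umat_eq_RZ_mul_RY_mul_RZ (α β γ : ℝ) : Umat α β γ = RZ α * RY γ * RZ β := by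
  have hexp : ∀ x y w : ℂ, Complex.exp x * w * Complex.exp y = Complex.exp (x + y) * w := by
    intro x y w; rw [Complex.exp_add]; ring
  rw [RZ, RY, RZ, Umat, mul_fin_two, mul_fin_two]
  ext i j
  fin_cases i <;> fin_cases j <;> simp
  all_goals rw [hexp]; congr 2; ring

lemma list_prod_exp_walshCoeff (n : ℕ) (θ : ℕ → ℝ) :
    ((Finset.univ : Finset (Fin n → Bool)).toList.map fun f =>
        NormedSpace.exp ((Complex.I * (walshCoeff n θ f : ℂ)) • kronLast (IZ n f) σ3)).prod =
      blockDiag2 (2 ^ n) fun j => RZ (θ j) := by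
  simp only [list_prod_exp_kronLast_IZ_σ3, RZ_eq_diagonal, blockDiag2_diagonal]
  congr 1; funext i
  rw [sum_walshCoeff_mul_walsh n θ (by omega)]

/-- For every `n ≥ 1` (here written as `n + 1`) and all
`α, β, γ ∈ ℝ^(2^n)`, there exist reals `t_A`, `t'_A` indexed by the IZ-strings `A` of length
`n` such that `blockdiag(U(α_j,β_j,γ_j))_j = (∏_A exp(i t_A (A ⊗ σ3))) ⬝
blockdiag(R_Y(γ_j))_j ⬝ (∏_A exp(i t'_A (A ⊗ σ3)))`. -/
theorem blockdiag_exp_decomp (n : ℕ) (α β γ : ℕ → ℝ) :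
    ∃ t t' : (Fin n → Bool) → ℝ,
      blockDiag2 (2 ^ n) (fun j => Umat (α j) (β j) (γ j)) =
        ((Finset.univ : Finset (Fin n → Bool)).toList.map
            (fun f => NormedSpace.exp ((Complex.I * (t f : ℂ)) • kronLast (IZ n f) σ3))).prod *
          blockDiag2 (2 ^ n) (fun j => RY (γ j)) *
          ((Finset.univ : Finset (Fin n → Bool)).toList.map
            (fun f =>
              NormedSpace.exp ((Complex.I * (t' f : ℂ)) • kronLast (IZ n f) σ3))).prod := by
  refine ⟨walshCoeff n α, walshCoeff n β, ?_⟩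
  rw [list_prod_exp_walshCoeff, list_prod_exp_walshCoeff, blockDiag2_mul, blockDiag2_mul]
  simp only [Umat_eq_RZ_mul_RY_mul_RZ]
end
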